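/- arXiv:2403.05771 — 4 statements merged into one kernel-verified Lean document; each statement's English description precedes it below -/
import Mathlib

section
/- Let n, m be natural numbers, p ∈ ℝⁿ, f₂ an n×m real matrix, u̲, ū : Fin m → ℝ with u̲ j ≤ 0 ≤ ū j for all j, and A, B : Fin n → Fin m → ℝ with A i j ≤ 0 ≤ B i j for all i, j. Let U = {u : Fin m → ℝ | ∀ j, u j ∈ [u̲ j, ū j]} and D₂ = {d : Fin n → Fin m → ℝ | ∀ i j, d i j ∈ [A i j, B i j]}. For each j set c⁺ⱼ = ∑ᵢ p i · (f₂ i j + (if p i < 0 then B i j else A i j)) and c⁻ⱼ = ∑ᵢ p i · (f₂ i j + (if p i ≥ 0 then B i j else A i j)). Then the maximin value sup over u ∈ U of (inf over d₂ ∈ D₂ of ∑ᵢ p i · ∑ⱼ (f₂ i j + d₂ i j) · u j) equals ∑ⱼ max(ū j · c⁺ⱼ, max(u̲ j · c⁻ⱼ, 0)). -/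
/-- Closed-form value of the control–uncertainty maximin game:
`sup_{u ∈ U} inf_{d₂ ∈ D₂} ⟨p, (f₂ + d₂) u⟩ = ∑ⱼ max (ūⱼ c⁺ⱼ) (max (u̲ⱼ c⁻ⱼ) 0)`,
where `c⁺ⱼ = ∑ᵢ p i (f₂ i j + (if p i < 0 then B i j else A i j))` and
`c⁻ⱼ = ∑ᵢ p i (f₂ i j + (if p i ≥ 0 then B i j else A i j))`. -/
theorem maximin_game_value
    (n m : ℕ) (p : Fin n → ℝ) (f₂ A B : Fin n → Fin m → ℝ)
    (ulo uhi : Fin m → ℝ)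
    (hu : ∀ j, ulo j ≤ 0 ∧ 0 ≤ uhi j)
    (hAB : ∀ i j, A i j ≤ 0 ∧ 0 ≤ B i j) :
    sSup {y : ℝ | ∃ u : Fin m → ℝ, (∀ j, u j ∈ Set.Icc (ulo j) (uhi j)) ∧
        y = sInf {z : ℝ | ∃ d : Fin n → Fin m → ℝ,
          (∀ i j, d i j ∈ Set.Icc (A i j) (B i j)) ∧
          z = ∑ i, p i * ∑ j, (f₂ i j + d i j) * u j}}
      = ∑ j, max (uhi j * (∑ i, p i * (f₂ i j + if p i < 0 then B i j else A i j)))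
          (max (ulo j * (∑ i, p i * (f₂ i j + if 0 ≤ p i then B i j else A i j))) 0) := by
  have hA0 : ∀ i j, A i j ≤ 0 := fun i j => (hAB i j).1
  have hB0 : ∀ i j, 0 ≤ B i j := fun i j => (hAB i j).2
  set cp : Fin m → ℝ := fun j => ∑ i, p i * (f₂ i j + if p i < 0 then B i j else A i j) with hcp
  set cm : Fin m → ℝ := fun j => ∑ i, p i * (f₂ i j + if 0 ≤ p i then B i j else A i j) with hcm
  set h : Fin m → ℝ → ℝ :=
    fun j t => ∑ i, (p i * f₂ i j * t + min (p i * A i j * t) (p i * B i j * t)) with hh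
  -- inner infimum
  have inner : ∀ u : Fin m → ℝ,
      sInf {z : ℝ | ∃ d : Fin n → Fin m → ℝ,
          (∀ i j, d i j ∈ Set.Icc (A i j) (B i j)) ∧
          z = ∑ i, p i * ∑ j, (f₂ i j + d i j) * u j} = ∑ j, h j (u j) := by
    intro u
    have hrw : ∀ d : Fin n → Fin m → ℝ,
        ∑ i, p i * ∑ j, (f₂ i j + d i j) * u j
          = ∑ j, ∑ i, (p i * f₂ i j * u j + p i * d i j * u j) := by
      intro d
      simp_rw [Finset.mul_sum]
      rw [Finset.sum_comm]
      exact Finset.sum_congr rfl fun j _ => Finset.sum_congr rfl fun i _ => by ring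
    apply IsLeast.csInf_eq
    constructor
    · refine ⟨fun i j => if 0 ≤ p i * u j then A i j else B i j, ?_, ?_⟩
      · intro i j
        dsimp only
        split <;> exact ⟨by linarith [hA0 i j, hB0 i j], by linarith [hA0 i j, hB0 i j]⟩
      · rw [hrw]
        refine (Finset.sum_congr rfl fun j _ => Finset.sum_congr rfl fun i _ => ?_).symm
        congr 1
        rcases le_or_gt 0 (p i * u j) with hpu | hpu
        · rw [if_pos hpu, min_eq_left (by nlinarith [hA0 i j, hB0 i j])]
        · rw [if_neg (not_le.mpr hpu), min_eq_right (by nlinarith [hA0 i j, hB0 i j])]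
    · rintro z ⟨d, hd, rfl⟩
      rw [hrw]
      refine Finset.sum_le_sum fun j _ => Finset.sum_le_sum fun i _ => ?_
      have h1 := (hd i j).1
      have h2 := (hd i j).2
      rcases le_or_gt 0 (p i * u j) with hpu | hpu
      · have : p i * A i j * u j ≤ p i * d i j * u j := by nlinarith
        linarith [min_le_left (p i * A i j * u j) (p i * B i j * u j)]
      · have : p i * B i j * u j ≤ p i * d i j * u j := by nlinarith
        linarith [min_le_right (p i * A i j * u j) (p i * B i j * u j)]
  -- h on nonnegative / nonpositive arguments
  have hpos : ∀ j t, 0 ≤ t → h j t = t * cp j := by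
    intro j t ht
    rw [hh, hcp]
    simp only
    rw [Finset.mul_sum]
    refine Finset.sum_congr rfl fun i _ => ?_
    rcases lt_or_ge (p i) 0 with hp | hp
    · rw [if_pos hp, min_eq_right (by nlinarith [mul_nonneg ht (sub_nonneg.mpr ((hA0 i j).trans (hB0 i j)))])]; ring
    · rw [if_neg (not_lt.mpr hp), min_eq_left (by nlinarith [mul_nonneg ht (sub_nonneg.mpr ((hA0 i j).trans (hB0 i j)))])]; ring
  have hneg : ∀ j t, t ≤ 0 → h j t = t * cm j := by
    intro j t ht
    rw [hh, hcm]
    simp only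
    rw [Finset.mul_sum]
    refine Finset.sum_congr rfl fun i _ => ?_
    rcases le_or_gt 0 (p i) with hp | hp
    · rw [if_pos hp, min_eq_right (by nlinarith [mul_nonpos_of_nonneg_of_nonpos (sub_nonneg.mpr ((hA0 i j).trans (hB0 i j))) ht])]; ring
    · rw [if_neg (not_le.mpr hp), min_eq_left (by nlinarith [mul_nonpos_of_nonneg_of_nonpos (sub_nonneg.mpr ((hA0 i j).trans (hB0 i j))) ht])]; ring
  set M : Fin m → ℝ := fun j => max (uhi j * cp j) (max (ulo j * cm j) 0) with hM
  -- per-coordinate upper bound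
  have hub : ∀ (j : Fin m) (t : ℝ), ulo j ≤ t → t ≤ uhi j → h j t ≤ M j := by
    intro j t h1 h2
    rcases le_or_gt 0 t with ht | ht
    · rw [hpos j t ht]
      rcases le_or_gt 0 (cp j) with hc | hc
      · exact le_trans (by nlinarith) (le_max_left _ _)
      · exact le_trans (by nlinarith) (le_trans (le_max_right _ _) (le_max_right _ _))
    · rw [hneg j t ht.le]
      rcases le_or_gt (cm j) 0 with hc | hc
      · exact le_trans (by nlinarith [(hu j).1]) (le_trans (le_max_left _ _) (le_max_right _ _))
      · exact le_trans (by nlinarith) (le_trans (le_max_right _ _) (le_max_right _ _))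
  -- maximizer
  set ustar : Fin m → ℝ := fun j =>
    if max (ulo j * cm j) 0 ≤ uhi j * cp j then uhi j
    else if 0 ≤ ulo j * cm j then ulo j else 0 with hus
  have hustar_mem : ∀ j, ustar j ∈ Set.Icc (ulo j) (uhi j) := by
    intro j
    rw [hus]
    simp only
    split
    · exact ⟨le_trans (hu j).1 (hu j).2, le_refl _⟩
    · split
      · exact ⟨le_refl _, le_trans (hu j).1 (hu j).2⟩
      · exact ⟨(hu j).1, (hu j).2⟩
  have hustar_val : ∀ j, h j (ustar j) = M j := by
    intro j
    rw [hM, hus]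
    simp only
    rcases le_or_gt (max (ulo j * cm j) 0) (uhi j * cp j) with hc | hc
    · rw [if_pos hc, hpos j _ (hu j).2, max_eq_left hc]
    · rw [if_neg (not_le.mpr hc), max_eq_right hc.le]
      rcases le_or_gt 0 (ulo j * cm j) with hc2 | hc2
      · rw [if_pos hc2, hneg j _ (hu j).1, max_eq_left hc2]
      · rw [if_neg (not_le.mpr hc2), max_eq_right hc2.le, hpos j 0 le_rfl, zero_mul]
  apply IsGreatest.csSup_eq
  constructor
  · exact ⟨ustar, hustar_mem, by
      rw [inner ustar]
      exact Finset.sum_congr rfl fun j _ => (hustar_val j).symm⟩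
  · rintro y ⟨u, hum, rfl⟩
    rw [inner u]
    exact Finset.sum_le_sum fun j _ => hub j (u j) (hum j).1 (hum j).2
end

section
/- Let n, m be natural numbers, p ∈ ℝⁿ, f₂ an n×m real matrix, u̲, ū : Fin m → ℝ with u̲ j ≤ 0 ≤ ū j for all j, and A, B : Fin n → Fin m → ℝ with A i j ≤ 0 ≤ B i j for all i, j. Let U = {u : Fin m → ℝ | ∀ j, u j ∈ [u̲ j, ū j]} and D₂ = {d : Fin n → Fin m → ℝ | ∀ i j, d i j ∈ [A i j, B i j]}. For each j set c⁺ⱼ = ∑ᵢ p i · (f₂ i j + (if p i < 0 then B i j else A i j)) and c⁻ⱼ = ∑ᵢ p i · (f₂ i j + (if p i ≥ 0 then B i j else A i j)), and define u* ∈ ℝᵐ by u* j = ū j if c⁺ⱼ > 0, u* j = u̲ j if c⁻ⱼ < 0, and u* j = 0 otherwise. Then u* ∈ U and the inner minimum inf over d₂ ∈ D₂ of ∑ᵢ p i · ∑ⱼ (f₂ i j + d₂ i j) · (u* j) equals the maximin value sup over u ∈ U of (inf over d₂ ∈ D₂ of ∑ᵢ p i · ∑ⱼ (f₂ i j + d₂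 i j) · u j); that is, u* is an optimal control for the maximin game. -/
/-- Optimality of the closed-form bang-bang safety controller `u*`:
`u* j = ū j` if `c⁺ⱼ > 0`, `u* j = u̲ j` if `c⁻ⱼ < 0`, else `0`. Then `u* ∈ U` and
`inf_{d₂ ∈ D₂} ⟨p, (f₂ + d₂) u*⟩ = sup_{u ∈ U} inf_{d₂ ∈ D₂} ⟨p, (f₂ + d₂) u⟩`. -/
theorem optimal_control_attains_maximin
    (n m : ℕ) (p : Fin n → ℝ) (f₂ A B : Fin n → Fin m → ℝ)
    (ulo uhi : Fin m → ℝ)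
    (hu : ∀ j, ulo j ≤ 0 ∧ 0 ≤ uhi j)
    (hAB : ∀ i j, A i j ≤ 0 ∧ 0 ≤ B i j)
    (cplus cminus : Fin m → ℝ)
    (hcp : ∀ j, cplus j = ∑ i, p i * (f₂ i j + if p i < 0 then B i j else A i j))
    (hcm : ∀ j, cminus j = ∑ i, p i * (f₂ i j + if 0 ≤ p i then B i j else A i j))
    (ustar : Fin m → ℝ)
    (hustar : ∀ j, ustar j =
      if 0 < cplus j then uhi j else if cminus j < 0 then ulo j else 0) :
    (∀ j, ustar j ∈ Set.Icc (ulo j) (uhi j)) ∧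
    sInf {z : ℝ | ∃ d : Fin n → Fin m → ℝ,
        (∀ i j, d i j ∈ Set.Icc (A i j) (B i j)) ∧
        z = ∑ i, p i * ∑ j, (f₂ i j + d i j) * ustar j}
      = sSup {y : ℝ | ∃ u : Fin m → ℝ, (∀ j, u j ∈ Set.Icc (ulo j) (uhi j)) ∧
          y = sInf {z : ℝ | ∃ d : Fin n → Fin m → ℝ,
            (∀ i j, d i j ∈ Set.Icc (A i j) (B i j)) ∧
            z = ∑ i, p i * ∑ j, (f₂ i j + d i j) * u j}} := by
  have hAB' : ∀ i j, A i j ≤ B i j := fun i j => (hAB i j).1.trans (hAB i j).2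
  set φ : (Fin m → ℝ) → ℝ :=
    fun u => ∑ j, (if 0 ≤ u j then u j * cplus j else u j * cminus j) with hφ
  -- rewriting the bilinear form as a double sum over j then i
  have hval : ∀ (u : Fin m → ℝ) (d : Fin n → Fin m → ℝ),
      (∑ i, p i * ∑ j, (f₂ i j + d i j) * u j)
      = ∑ j, ∑ i, p i * ((f₂ i j + d i j) * u j) := by
    intro u d
    simp_rw [Finset.mul_sum]
    rw [Finset.sum_comm]
  -- key: inner infimum equals φ u
  have key : ∀ u : Fin m → ℝ,
      sInf {z : ℝ | ∃ d : Fin n → Fin m → ℝ,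
        (∀ i j, d i j ∈ Set.Icc (A i j) (B i j)) ∧
        z = ∑ i, p i * ∑ j, (f₂ i j + d i j) * u j} = φ u := by
    intro u
    set dstar : Fin n → Fin m → ℝ := fun i j =>
      if 0 ≤ u j then (if p i < 0 then B i j else A i j)
      else (if 0 ≤ p i then B i j else A i j) with hd
    have hdmem : ∀ i j, dstar i j ∈ Set.Icc (A i j) (B i j) := by
      intro i j
      rw [Set.mem_Icc]
      simp only [hd]
      split_ifs <;> first
        | exact ⟨hAB' i j, le_rfl⟩
        | exact ⟨le_rfl, hAB' i j⟩
    have hdval : (∑ i, p i * ∑ j, (f₂ i j + dstar i j) * u j) = φ u := by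
      rw [hval]
      apply Finset.sum_congr rfl
      intro j _
      by_cases h : 0 ≤ u j
      · simp only [hd, if_pos h, hφ]
        rw [hcp j, Finset.mul_sum]
        apply Finset.sum_congr rfl
        intro i _; ring
      · simp only [hd, if_neg h, hφ]
        rw [hcm j, Finset.mul_sum]
        apply Finset.sum_congr rfl
        intro i _; ring
    have hlb : ∀ z ∈ {z : ℝ | ∃ d : Fin n → Fin m → ℝ,
        (∀ i j, d i j ∈ Set.Icc (A i j) (B i j)) ∧
        z = ∑ i, p i * ∑ j, (f₂ i j + d i j) * u j}, φ u ≤ z := by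
      rintro z ⟨d, hdm, rfl⟩
      rw [← hdval, hval, hval]
      apply Finset.sum_le_sum
      intro j _
      apply Finset.sum_le_sum
      intro i _
      obtain ⟨hdl, hdr⟩ := Set.mem_Icc.mp (hdm i j)
      simp only [hd]
      split_ifs with h1 h2 h3
      · -- 0 ≤ u j, p i < 0 : dstar = B
        nlinarith [mul_nonneg (sub_nonneg.2 hdr) (mul_nonneg (neg_nonneg.2 h2.le) h1)]
      · -- 0 ≤ u j, 0 ≤ p i : dstar = A
        push_neg at h2
        nlinarith [mul_nonneg (sub_nonneg.2 hdl) (mul_nonneg h2 h1)]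
      · -- u j < 0, 0 ≤ p i : dstar = B
        push_neg at h1
        nlinarith [mul_nonneg (sub_nonneg.2 hdr) (mul_nonneg h3 (neg_nonneg.2 h1.le))]
      · -- u j < 0, p i < 0 : dstar = A
        push_neg at h1 h3
        nlinarith [mul_nonneg (sub_nonneg.2 hdl)
          (mul_nonneg (neg_nonneg.2 h3.le) (neg_nonneg.2 h1.le))]
    have hmem : φ u ∈ {z : ℝ | ∃ d : Fin n → Fin m → ℝ,
        (∀ i j, d i j ∈ Set.Icc (A i j) (B i j)) ∧
        z = ∑ i, p i * ∑ j, (f₂ i j + d i j) * u j} :=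
      ⟨dstar, hdmem, hdval.symm⟩
    exact le_antisymm (csInf_le ⟨φ u, hlb⟩ hmem) (le_csInf ⟨_, hmem⟩ hlb)
  -- cplus ≤ cminus
  have hcpm : ∀ j, cplus j ≤ cminus j := by
    intro j
    rw [hcp j, hcm j]
    apply Finset.sum_le_sum
    intro i _
    by_cases h : p i < 0
    · rw [if_pos h, if_neg (not_le.2 h)]
      nlinarith [mul_nonneg (sub_nonneg.2 (hAB' i j)) (neg_nonneg.2 h.le)]
    · push_neg at h
      rw [if_neg (not_lt.2 h), if_pos h]
      nlinarith [mul_nonneg (sub_nonneg.2 (hAB' i j)) h]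
  -- ustar is feasible
  have hfeas : ∀ j, ustar j ∈ Set.Icc (ulo j) (uhi j) := by
    intro j
    rw [Set.mem_Icc, hustar j]
    obtain ⟨h1, h2⟩ := hu j
    split_ifs <;> constructor <;> linarith
  -- φ u ≤ φ ustar for feasible u
  have hopt : ∀ u : Fin m → ℝ, (∀ j, u j ∈ Set.Icc (ulo j) (uhi j)) →
      φ u ≤ φ ustar := by
    intro u huf
    apply Finset.sum_le_sum
    intro j _
    obtain ⟨h1, h2⟩ := Set.mem_Icc.mp (huf j)
    obtain ⟨hl, hh⟩ := hu j
    have hcc := hcpm j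
    rw [hustar j]
    by_cases hp : 0 < cplus j
    · rw [if_pos hp]
      rw [if_pos (hh.trans (le_of_eq rfl))]
      split_ifs with h
      · nlinarith
      · push_neg at h
        nlinarith
    · rw [if_neg hp]
      push_neg at hp
      by_cases hmn : cminus j < 0
      · rw [if_pos hmn]
        have hcp0 : cplus j < 0 := lt_of_le_of_lt hcc hmn
        by_cases hl0 : 0 ≤ ulo j
        · have : ulo j = 0 := le_antisymm hl hl0
          rw [if_pos hl0, this]
          split_ifs with h
          · nlinarith
          · push_neg at h; nlinarith
        · rw [if_neg hl0]
          split_ifs with h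
          · nlinarith
          · push_neg at h; nlinarith
      · rw [if_neg hmn]
        push_neg at hmn
        rw [if_pos le_rfl, zero_mul]
        split_ifs with h
        · nlinarith
        · push_neg at h; nlinarith
  refine ⟨hfeas, ?_⟩
  rw [key ustar]
  have hmem : φ ustar ∈ {y : ℝ | ∃ u : Fin m → ℝ,
      (∀ j, u j ∈ Set.Icc (ulo j) (uhi j)) ∧
      y = sInf {z : ℝ | ∃ d : Fin n → Fin m → ℝ,
        (∀ i j, d i j ∈ Set.Icc (A i j) (B i j)) ∧
        z = ∑ i, p i * ∑ j, (f₂ i j + d i j) * u j}} :=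
    ⟨ustar, hfeas, (key ustar).symm⟩
  have hub : ∀ y ∈ {y : ℝ | ∃ u : Fin m → ℝ,
      (∀ j, u j ∈ Set.Icc (ulo j) (uhi j)) ∧
      y = sInf {z : ℝ | ∃ d : Fin n → Fin m → ℝ,
        (∀ i j, d i j ∈ Set.Icc (A i j) (B i j)) ∧
        z = ∑ i, p i * ∑ j, (f₂ i j + d i j) * u j}}, y ≤ φ ustar := by
    rintro y ⟨u, huf, rfl⟩
    rw [key u]
    exact hopt u huf
  exact le_antisymm (le_csSup ⟨φ ustar, hub⟩ hmem) (csSup_le ⟨_, hmem⟩ hub)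
end

section
/- Let n, m be natural numbers, p, f₁ ∈ ℝⁿ, f₂ an n×m real matrix, a, b : Fin n → ℝ with a i ≤ b i for all i, u̲, ū : Fin m → ℝ with u̲ j ≤ ū j for all j, and A, B : Fin n → Fin m → ℝ with A i j ≤ B i j for all i, j. Let D₁ = {d : Fin n → ℝ | ∀ i, d i ∈ [a i, b i]}, U = {u : Fin m → ℝ | ∀ j, u j ∈ [u̲ j, ū j]}, and D₂ = {d : Fin n → Fin m → ℝ | ∀ i j, d i j ∈ [A i j, B i j]}. Then sup over u ∈ U of (inf over d₁ ∈ D₁, d₂ ∈ D₂ of ∑ᵢ p i · (f₁ i + d₁ i + ∑ⱼ (f₂ i j + d₂ i j) · u j)) equals (inf over d₁ ∈ D₁ of ∑ᵢ p i · (f₁ i + d₁ i)) + (sup over u ∈ U of inf over d₂ ∈ D₂ of ∑ᵢ p i · ∑ⱼ (f₂ i j + d₂ i j) · u j). -/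
/-- Infimum of a separable sum decouples. -/
lemma sInf_decouple {α β : Type*} (P : α → Prop) (Q : β → Prop) (F : α → ℝ) (G : β → ℝ)
    (x₀ : α) (hx₀ : P x₀) (y₀ : β) (hy₀ : Q y₀)
    (mF : ℝ) (hmF : ∀ x, P x → mF ≤ F x) (mG : ℝ) (hmG : ∀ y, Q y → mG ≤ G y) :
    sInf {z : ℝ | ∃ x, P x ∧ ∃ y, Q y ∧ z = F x + G y}
      = sInf {z : ℝ | ∃ x, P x ∧ z = F x} + sInf {z : ℝ | ∃ y, Q y ∧ z = G y} := by
  set S : Set ℝ := {z : ℝ | ∃ x, P x ∧ z = F x} with hS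
  set T : Set ℝ := {z : ℝ | ∃ y, Q y ∧ z = G y} with hT
  set Z : Set ℝ := {z : ℝ | ∃ x, P x ∧ ∃ y, Q y ∧ z = F x + G y} with hZ
  have hSne : S.Nonempty := ⟨F x₀, x₀, hx₀, rfl⟩
  have hTne : T.Nonempty := ⟨G y₀, y₀, hy₀, rfl⟩
  have hZne : Z.Nonempty := ⟨F x₀ + G y₀, x₀, hx₀, y₀, hy₀, rfl⟩
  have hSb : BddBelow S := ⟨mF, by rintro z ⟨x, hx, rfl⟩; exact hmF x hx⟩
  have hTb : BddBelow T := ⟨mG, by rintro z ⟨y, hy, rfl⟩; exact hmG y hy⟩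
  have hZb : BddBelow Z := ⟨mF + mG, by
    rintro z ⟨x, hx, y, hy, rfl⟩
    exact add_le_add (hmF x hx) (hmG y hy)⟩
  apply le_antisymm
  · have key : ∀ y, Q y → sInf Z - sInf S ≤ G y := by
      intro y hy
      have h1 : sInf Z - G y ≤ sInf S := by
        apply le_csInf hSne
        rintro z ⟨x, hx, rfl⟩
        have := csInf_le hZb (⟨x, hx, y, hy, rfl⟩ : F x + G y ∈ Z)
        linarith
      linarith
    have : sInf Z - sInf S ≤ sInf T := by
      apply le_csInf hTne
      rintro z ⟨y, hy, rfl⟩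
      exact key y hy
    linarith
  · apply le_csInf hZne
    rintro z ⟨x, hx, y, hy, rfl⟩
    have h1 := csInf_le hSb (⟨x, hx, rfl⟩ : F x ∈ S)
    have h2 := csInf_le hTb (⟨y, hy, rfl⟩ : G y ∈ T)
    linarith

/-- Supremum of a constant plus a function decouples. -/
lemma sSup_const_add {β : Type*} (Q : β → Prop) (g : β → ℝ) (y₀ : β) (hy₀ : Q y₀)
    (M : ℝ) (hM : ∀ y, Q y → g y ≤ M) (c : ℝ) :
    sSup {z : ℝ | ∃ y, Q y ∧ z = c + g y} = c + sSup {z : ℝ | ∃ y, Q y ∧ z = g y} := by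
  set T : Set ℝ := {z : ℝ | ∃ y, Q y ∧ z = g y} with hT
  set Z : Set ℝ := {z : ℝ | ∃ y, Q y ∧ z = c + g y} with hZ
  have hTne : T.Nonempty := ⟨g y₀, y₀, hy₀, rfl⟩
  have hZne : Z.Nonempty := ⟨c + g y₀, y₀, hy₀, rfl⟩
  have hTb : BddAbove T := ⟨M, by rintro z ⟨y, hy, rfl⟩; exact hM y hy⟩
  have hZb : BddAbove Z := ⟨c + M, by rintro z ⟨y, hy, rfl⟩; linarith [hM y hy]⟩
  apply le_antisymm
  · apply csSup_le hZne
    rintro z ⟨y, hy, rfl⟩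
    have := le_csSup hTb (⟨y, hy, rfl⟩ : g y ∈ T)
    linarith
  · have : sSup T ≤ sSup Z - c := by
      apply csSup_le hTne
      rintro z ⟨y, hy, rfl⟩
      have := le_csSup hZb (⟨y, hy, rfl⟩ : c + g y ∈ Z)
      linarith
    linarith

/-- The Hamiltonian maximin game decouples: the additive uncertainty
`d₁` enters independently of the control, so
`sup_{u ∈ U} inf_{d₁ ∈ D₁, d₂ ∈ D₂} ⟨p, f₁ + d₁ + (f₂ + d₂) u⟩
  = inf_{d₁ ∈ D₁} ⟨p, f₁ + d₁⟩ + sup_{u ∈ U} inf_{d₂ ∈ D₂} ⟨p, (f₂ + d₂) u⟩`. -/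
theorem hamiltonian_game_decoupling
    (n m : ℕ) (p f₁ : Fin n → ℝ) (f₂ : Fin n → Fin m → ℝ)
    (a b : Fin n → ℝ) (hab : ∀ i, a i ≤ b i)
    (ulo uhi : Fin m → ℝ) (hu : ∀ j, ulo j ≤ uhi j)
    (A B : Fin n → Fin m → ℝ) (hAB : ∀ i j, A i j ≤ B i j) :
    sSup {y : ℝ | ∃ u : Fin m → ℝ, (∀ j, u j ∈ Set.Icc (ulo j) (uhi j)) ∧
        y = sInf {z : ℝ | ∃ d₁ : Fin n → ℝ, (∀ i, d₁ i ∈ Set.Icc (a i) (b i)) ∧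
          ∃ d₂ : Fin n → Fin m → ℝ, (∀ i j, d₂ i j ∈ Set.Icc (A i j) (B i j)) ∧
          z = ∑ i, p i * (f₁ i + d₁ i + ∑ j, (f₂ i j + d₂ i j) * u j)}}
      = sInf {z : ℝ | ∃ d₁ : Fin n → ℝ, (∀ i, d₁ i ∈ Set.Icc (a i) (b i)) ∧
          z = ∑ i, p i * (f₁ i + d₁ i)}
        + sSup {y : ℝ | ∃ u : Fin m → ℝ, (∀ j, u j ∈ Set.Icc (ulo j) (uhi j)) ∧
            y = sInf {z : ℝ | ∃ d₂ : Fin n → Fin m → ℝ,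
              (∀ i j, d₂ i j ∈ Set.Icc (A i j) (B i j)) ∧
              z = ∑ i, p i * ∑ j, (f₂ i j + d₂ i j) * u j}} := by
  -- abbreviations
  set F : (Fin n → ℝ) → ℝ := fun d₁ => ∑ i, p i * (f₁ i + d₁ i) with hF
  set M₁ : ℝ := ∑ i, |p i| * (|f₁ i| + max |a i| |b i|) with hM₁
  set M₂ : ℝ := ∑ i, |p i| * ∑ j, (|f₂ i j| + max |A i j| |B i j|) * max |ulo j| |uhi j| with hM₂
  -- lower bound for F
  have hFb : ∀ d₁ : Fin n → ℝ, (∀ i, d₁ i ∈ Set.Icc (a i) (b i)) → -M₁ ≤ F d₁ := by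
    intro d₁ hd₁
    rw [hF, hM₁, ← Finset.sum_neg_distrib]
    apply Finset.sum_le_sum
    intro i _
    have h1 : |d₁ i| ≤ max |a i| |b i| := abs_le_max_abs_abs (hd₁ i).1 (hd₁ i).2
    have h2 : |p i * (f₁ i + d₁ i)| ≤ |p i| * (|f₁ i| + max |a i| |b i|) := by
      rw [abs_mul]
      exact mul_le_mul_of_nonneg_left ((abs_add_le _ _).trans (by linarith)) (abs_nonneg _)
    have := neg_abs_le (p i * (f₁ i + d₁ i))
    linarith
  -- bound for the bilinear term, uniform over admissible u
  have hGb : ∀ (u : Fin m → ℝ), (∀ j, u j ∈ Set.Icc (ulo j) (uhi j)) →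
      ∀ d₂ : Fin n → Fin m → ℝ, (∀ i j, d₂ i j ∈ Set.Icc (A i j) (B i j)) →
      |∑ i, p i * ∑ j, (f₂ i j + d₂ i j) * u j| ≤ M₂ := by
    intro u hu' d₂ hd₂
    calc |∑ i, p i * ∑ j, (f₂ i j + d₂ i j) * u j|
        ≤ ∑ i, |p i * ∑ j, (f₂ i j + d₂ i j) * u j| := Finset.abs_sum_le_sum_abs _ _
      _ ≤ M₂ := by
          rw [hM₂]
          apply Finset.sum_le_sum
          intro i _
          rw [abs_mul]
          apply mul_le_mul_of_nonneg_left _ (abs_nonneg _)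
          calc |∑ j, (f₂ i j + d₂ i j) * u j|
              ≤ ∑ j, |(f₂ i j + d₂ i j) * u j| := Finset.abs_sum_le_sum_abs _ _
            _ ≤ ∑ j, (|f₂ i j| + max |A i j| |B i j|) * max |ulo j| |uhi j| := by
                apply Finset.sum_le_sum
                intro j _
                rw [abs_mul]
                have h1 : |d₂ i j| ≤ max |A i j| |B i j| :=
                  abs_le_max_abs_abs (hd₂ i j).1 (hd₂ i j).2
                have h2 : |u j| ≤ max |ulo j| |uhi j| :=
                  abs_le_max_abs_abs (hu' j).1 (hu' j).2
                have h3 : |f₂ i j + d₂ i j| ≤ |f₂ i j| + max |A i j| |B i j| :=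
                  (abs_add_le _ _).trans (by linarith)
                exact mul_le_mul h3 h2 (abs_nonneg _) (by positivity)
  -- decouple the inner infimum for each admissible u
  have key : ∀ (u : Fin m → ℝ), (∀ j, u j ∈ Set.Icc (ulo j) (uhi j)) →
      sInf {z : ℝ | ∃ d₁ : Fin n → ℝ, (∀ i, d₁ i ∈ Set.Icc (a i) (b i)) ∧
          ∃ d₂ : Fin n → Fin m → ℝ, (∀ i j, d₂ i j ∈ Set.Icc (A i j) (B i j)) ∧
          z = ∑ i, p i * (f₁ i + d₁ i + ∑ j, (f₂ i j + d₂ i j) * u j)}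
      = sInf {z : ℝ | ∃ d₁ : Fin n → ℝ, (∀ i, d₁ i ∈ Set.Icc (a i) (b i)) ∧
          z = ∑ i, p i * (f₁ i + d₁ i)}
        + sInf {z : ℝ | ∃ d₂ : Fin n → Fin m → ℝ,
            (∀ i j, d₂ i j ∈ Set.Icc (A i j) (B i j)) ∧
            z = ∑ i, p i * ∑ j, (f₂ i j + d₂ i j) * u j} := by
    intro u hu'
    have hsplit : ∀ (d₁ : Fin n → ℝ) (d₂ : Fin n → Fin m → ℝ),
        (∑ i, p i * (f₁ i + d₁ i + ∑ j, (f₂ i j + d₂ i j) * u j))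
        = (∑ i, p i * (f₁ i + d₁ i)) + ∑ i, p i * ∑ j, (f₂ i j + d₂ i j) * u j := by
      intro d₁ d₂
      rw [← Finset.sum_add_distrib]
      exact Finset.sum_congr rfl (fun i _ => by ring)
    have hset : {z : ℝ | ∃ d₁ : Fin n → ℝ, (∀ i, d₁ i ∈ Set.Icc (a i) (b i)) ∧
          ∃ d₂ : Fin n → Fin m → ℝ, (∀ i j, d₂ i j ∈ Set.Icc (A i j) (B i j)) ∧
          z = ∑ i, p i * (f₁ i + d₁ i + ∑ j, (f₂ i j + d₂ i j) * u j)}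
        = {z : ℝ | ∃ d₁ : Fin n → ℝ, (∀ i, d₁ i ∈ Set.Icc (a i) (b i)) ∧
          ∃ d₂ : Fin n → Fin m → ℝ, (∀ i j, d₂ i j ∈ Set.Icc (A i j) (B i j)) ∧
          z = (∑ i, p i * (f₁ i + d₁ i)) + ∑ i, p i * ∑ j, (f₂ i j + d₂ i j) * u j} := by
      ext z
      constructor
      · rintro ⟨d₁, h₁, d₂, h₂, rfl⟩
        exact ⟨d₁, h₁, d₂, h₂, hsplit d₁ d₂⟩
      · rintro ⟨d₁, h₁, d₂, h₂, rfl⟩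
        exact ⟨d₁, h₁, d₂, h₂, (hsplit d₁ d₂).symm⟩
    rw [hset]
    exact sInf_decouple
      (fun d₁ : Fin n → ℝ => ∀ i, d₁ i ∈ Set.Icc (a i) (b i))
      (fun d₂ : Fin n → Fin m → ℝ => ∀ i j, d₂ i j ∈ Set.Icc (A i j) (B i j))
      (fun d₁ => ∑ i, p i * (f₁ i + d₁ i))
      (fun d₂ => ∑ i, p i * ∑ j, (f₂ i j + d₂ i j) * u j)
      a (fun i => ⟨le_refl _, hab i⟩)
      A (fun i j => ⟨le_refl _, hAB i j⟩)
      (-M₁) (fun d₁ hd₁ => hFb d₁ hd₁)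
      (-M₂) (fun d₂ hd₂ => by
        have := hGb u hu' d₂ hd₂
        have := neg_abs_le (∑ i, p i * ∑ j, (f₂ i j + d₂ i j) * u j)
        linarith)
  -- rewrite outer set using key
  have houter : {y : ℝ | ∃ u : Fin m → ℝ, (∀ j, u j ∈ Set.Icc (ulo j) (uhi j)) ∧
        y = sInf {z : ℝ | ∃ d₁ : Fin n → ℝ, (∀ i, d₁ i ∈ Set.Icc (a i) (b i)) ∧
          ∃ d₂ : Fin n → Fin m → ℝ, (∀ i j, d₂ i j ∈ Set.Icc (A i j) (B i j)) ∧
          z = ∑ i, p i * (f₁ i + d₁ i + ∑ j, (f₂ i j + d₂ i j) * u j)}}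
      = {y : ℝ | ∃ u : Fin m → ℝ, (∀ j, u j ∈ Set.Icc (ulo j) (uhi j)) ∧
        y = (sInf {z : ℝ | ∃ d₁ : Fin n → ℝ, (∀ i, d₁ i ∈ Set.Icc (a i) (b i)) ∧
          z = ∑ i, p i * (f₁ i + d₁ i)})
          + sInf {z : ℝ | ∃ d₂ : Fin n → Fin m → ℝ,
            (∀ i j, d₂ i j ∈ Set.Icc (A i j) (B i j)) ∧
            z = ∑ i, p i * ∑ j, (f₂ i j + d₂ i j) * u j}} := by
    ext y
    constructor
    · rintro ⟨u, hu', rfl⟩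
      exact ⟨u, hu', key u hu'⟩
    · rintro ⟨u, hu', rfl⟩
      exact ⟨u, hu', (key u hu').symm⟩
  rw [houter]
  -- apply the sup decoupling lemma
  exact sSup_const_add
    (fun u : Fin m → ℝ => ∀ j, u j ∈ Set.Icc (ulo j) (uhi j))
    (fun u => sInf {z : ℝ | ∃ d₂ : Fin n → Fin m → ℝ,
        (∀ i j, d₂ i j ∈ Set.Icc (A i j) (B i j)) ∧
        z = ∑ i, p i * ∑ j, (f₂ i j + d₂ i j) * u j})
    ulo (fun j => ⟨le_refl _, hu j⟩)
    M₂ (fun u hu' => by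
      have hb : BddBelow {z : ℝ | ∃ d₂ : Fin n → Fin m → ℝ,
          (∀ i j, d₂ i j ∈ Set.Icc (A i j) (B i j)) ∧
          z = ∑ i, p i * ∑ j, (f₂ i j + d₂ i j) * u j} := by
        refine ⟨-M₂, ?_⟩
        rintro z ⟨d₂, hd₂, rfl⟩
        have := hGb u hu' d₂ hd₂
        have := neg_abs_le (∑ i, p i * ∑ j, (f₂ i j + d₂ i j) * u j)
        linarith
      have hmem : (∑ i, p i * ∑ j, (f₂ i j + A i j) * u j) ∈
          {z : ℝ | ∃ d₂ : Fin n → Fin m → ℝ,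
            (∀ i j, d₂ i j ∈ Set.Icc (A i j) (B i j)) ∧
            z = ∑ i, p i * ∑ j, (f₂ i j + d₂ i j) * u j} :=
        ⟨A, fun i j => ⟨le_refl _, hAB i j⟩, rfl⟩
      have h1 := csInf_le hb hmem
      have h2 := hGb u hu' A (fun i j => ⟨le_refl _, hAB i j⟩)
      have := le_abs_self (∑ i, p i * ∑ j, (f₂ i j + A i j) * u j)
      linarith)
    _
end

section
/- Let n, m be natural numbers, p, f₁ ∈ ℝⁿ, f₂ an n×m real matrix, u̲, ū : Fin m → ℝ with u̲ j ≤ ū j for all j, and A, B : Fin n → Fin m → ℝ with A i j ≤ B i j for all i, j. Let U = {u : Fin m → ℝ | ∀ j, u j ∈ [u̲ j, ū j]}, D₂ = {d : Fin n → Fin m → ℝ | ∀ i j, d i j ∈ [A i j, B i j]}, and let D₃ = {e : Fin n → ℝ | ∀ i, |e i| ≤ ∑ⱼ max(|u̲ j|, |ū j|) · max(|A i j|, |B i j|)}. Then sup over u ∈ U of (inf over e ∈ D₃ of ∑ᵢ p i · (f₁ i + ∑ⱼ f₂ i j · u j + e i)) ≤ sup over u ∈ U of (inf over d₂ ∈ D₂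 of ∑ᵢ p i · (f₁ i + ∑ⱼ (f₂ i j + d₂ i j) · u j)). -/
/-- Conservativeness of the control-independent ("Partial Game")
overapproximation: replacing the control-dependent uncertainty `d₂ u` by a
control-independent disturbance `e` in the symmetric box `D₃` with half-widths
`∑ⱼ max |u̲ⱼ| |ūⱼ| * max |A i j| |B i j|` can only decrease the robust
Hamiltonian value. -/
theorem partial_game_more_conservative
    (n m : ℕ) (p f₁ : Fin n → ℝ) (f₂ : Fin n → Fin m → ℝ)
    (ulo uhi : Fin m → ℝ) (hu : ∀ j, ulo j ≤ uhi j)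
    (A B : Fin n → Fin m → ℝ) (hAB : ∀ i j, A i j ≤ B i j) :
    sSup {y : ℝ | ∃ u : Fin m → ℝ, (∀ j, u j ∈ Set.Icc (ulo j) (uhi j)) ∧
        y = sInf {z : ℝ | ∃ e : Fin n → ℝ,
          (∀ i, |e i| ≤ ∑ j, max |ulo j| |uhi j| * max |A i j| |B i j|) ∧
          z = ∑ i, p i * (f₁ i + ∑ j, f₂ i j * u j + e i)}}
      ≤ sSup {y : ℝ | ∃ u : Fin m → ℝ, (∀ j, u j ∈ Set.Icc (ulo j) (uhi j)) ∧
          y = sInf {z : ℝ | ∃ d : Fin n → Fin m → ℝ,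
            (∀ i j, d i j ∈ Set.Icc (A i j) (B i j)) ∧
            z = ∑ i, p i * (f₁ i + ∑ j, (f₂ i j + d i j) * u j)}} := by
  have habs : ∀ (lo hi x : ℝ), lo ≤ x → x ≤ hi → |x| ≤ max |lo| |hi| := by
    intro lo hi x h1 h2
    rw [abs_le]
    refine ⟨?_, h2.trans ((le_abs_self hi).trans (le_max_right _ _))⟩
    calc -(max |lo| |hi|) ≤ -|lo| := neg_le_neg (le_max_left _ _)
      _ ≤ lo := neg_abs_le lo
      _ ≤ x := h1
  set a : Fin n → ℝ := fun i => ∑ j, max |ulo j| |uhi j| * max |A i j| |B i j| with ha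
  -- the inner set for the partial game is bounded below, for every u
  have hZ3bdd : ∀ u : Fin m → ℝ, BddBelow {z : ℝ | ∃ e : Fin n → ℝ,
      (∀ i, |e i| ≤ a i) ∧ z = ∑ i, p i * (f₁ i + ∑ j, f₂ i j * u j + e i)} := by
    intro u
    refine ⟨∑ i, -(|p i| * (|f₁ i + ∑ j, f₂ i j * u j| + a i)), ?_⟩
    rintro z ⟨e, he, rfl⟩
    apply Finset.sum_le_sum
    intro i _
    have h1 : |f₁ i + ∑ j, f₂ i j * u j + e i| ≤ |f₁ i + ∑ j, f₂ i j * u j| + a i :=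
      (abs_add_le _ _).trans (by gcongr; exact he i)
    calc -(|p i| * (|f₁ i + ∑ j, f₂ i j * u j| + a i))
        ≤ -(|p i| * |f₁ i + ∑ j, f₂ i j * u j + e i|) := by
          apply neg_le_neg; exact mul_le_mul_of_nonneg_left h1 (abs_nonneg _)
      _ = -|p i * (f₁ i + ∑ j, f₂ i j * u j + e i)| := by rw [abs_mul]
      _ ≤ _ := neg_abs_le _
  -- for admissible u, the D₂-induced set is contained in the D₃ set
  have hsub : ∀ u : Fin m → ℝ, (∀ j, u j ∈ Set.Icc (ulo j) (uhi j)) →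
      {z : ℝ | ∃ d : Fin n → Fin m → ℝ,
        (∀ i j, d i j ∈ Set.Icc (A i j) (B i j)) ∧
        z = ∑ i, p i * (f₁ i + ∑ j, (f₂ i j + d i j) * u j)} ⊆
      {z : ℝ | ∃ e : Fin n → ℝ,
        (∀ i, |e i| ≤ a i) ∧ z = ∑ i, p i * (f₁ i + ∑ j, f₂ i j * u j + e i)} := by
    rintro u hu' z ⟨d, hd, rfl⟩
    refine ⟨fun i => ∑ j, d i j * u j, ?_, ?_⟩
    · intro i
      calc |∑ j, d i j * u j| ≤ ∑ j, |d i j * u j| := Finset.abs_sum_le_sum_abs _ _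
        _ ≤ a i := by
            apply Finset.sum_le_sum
            intro j _
            rw [abs_mul, mul_comm]
            exact mul_le_mul (habs _ _ _ (hu' j).1 (hu' j).2)
              (habs _ _ _ (hd i j).1 (hd i j).2) (abs_nonneg _) (le_max_of_le_left (abs_nonneg _))
    · apply Finset.sum_congr rfl
      intro i _
      congr 1
      rw [add_assoc]
      congr 1
      rw [← Finset.sum_add_distrib]
      apply Finset.sum_congr rfl
      intro j _
      ring
  -- nonemptiness of the D₂ inner set
  have hZ2ne : ∀ u : Fin m → ℝ, ∃ z, z ∈ {z : ℝ | ∃ d : Fin n → Fin m → ℝ,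
      (∀ i j, d i j ∈ Set.Icc (A i j) (B i j)) ∧
      z = ∑ i, p i * (f₁ i + ∑ j, (f₂ i j + d i j) * u j)} := by
    intro u
    exact ⟨_, A, fun i j => ⟨le_refl _, hAB i j⟩, rfl⟩
  -- uniform bound for the RHS set
  have hbddAbove : BddAbove {y : ℝ | ∃ u : Fin m → ℝ,
      (∀ j, u j ∈ Set.Icc (ulo j) (uhi j)) ∧
      y = sInf {z : ℝ | ∃ d : Fin n → Fin m → ℝ,
        (∀ i j, d i j ∈ Set.Icc (A i j) (B i j)) ∧
        z = ∑ i, p i * (f₁ i + ∑ j, (f₂ i j + d i j) * u j)}} := by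
    refine ⟨∑ i, |p i| * (|f₁ i| + ∑ j, (|f₂ i j| + |A i j|) * max |ulo j| |uhi j|), ?_⟩
    rintro y ⟨u, hu', rfl⟩
    have h1 : sInf {z : ℝ | ∃ d : Fin n → Fin m → ℝ,
        (∀ i j, d i j ∈ Set.Icc (A i j) (B i j)) ∧
        z = ∑ i, p i * (f₁ i + ∑ j, (f₂ i j + d i j) * u j)} ≤
        ∑ i, p i * (f₁ i + ∑ j, (f₂ i j + A i j) * u j) := by
      apply csInf_le ((hZ3bdd u).mono (hsub u hu'))
      exact ⟨A, fun i j => ⟨le_refl _, hAB i j⟩, rfl⟩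
    refine h1.trans (Finset.sum_le_sum fun i _ => ?_)
    calc p i * (f₁ i + ∑ j, (f₂ i j + A i j) * u j)
        ≤ |p i * (f₁ i + ∑ j, (f₂ i j + A i j) * u j)| := le_abs_self _
      _ = |p i| * |f₁ i + ∑ j, (f₂ i j + A i j) * u j| := abs_mul _ _
      _ ≤ |p i| * (|f₁ i| + ∑ j, (|f₂ i j| + |A i j|) * max |ulo j| |uhi j|) := by
          apply mul_le_mul_of_nonneg_left _ (abs_nonneg _)
          refine (abs_add_le _ _).trans ?_
          gcongr
          refine (Finset.abs_sum_le_sum_abs _ _).trans (Finset.sum_le_sum fun j _ => ?_)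
          rw [abs_mul]
          exact mul_le_mul (abs_add_le _ _) (habs _ _ _ (hu' j).1 (hu' j).2) (abs_nonneg _)
            (by positivity)
  -- main argument
  apply csSup_le
  · exact ⟨_, ulo, fun j => ⟨le_refl _, hu j⟩, rfl⟩
  rintro y ⟨u, hu', rfl⟩
  have hle : sInf {z : ℝ | ∃ e : Fin n → ℝ,
      (∀ i, |e i| ≤ a i) ∧ z = ∑ i, p i * (f₁ i + ∑ j, f₂ i j * u j + e i)} ≤
      sInf {z : ℝ | ∃ d : Fin n → Fin m → ℝ,
        (∀ i j, d i j ∈ Set.Icc (A i j) (B i j)) ∧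
        z = ∑ i, p i * (f₁ i + ∑ j, (f₂ i j + d i j) * u j)} :=
    csInf_le_csInf (hZ3bdd u) (hZ2ne u) (hsub u hu')
  exact hle.trans (le_csSup hbddAbove ⟨u, hu', rfl⟩)
end
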